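/- arXiv:1505.01858 — 2 statements merged into one kernel-verified Lean document; each statement's English description precedes it below -/
import Mathlib

section
/- For α > 2, the integral ∫₀^∞ (1 − 1/(1 + s r^{−α})) · 2π r dr equals π s^{2/α} · Γ(1 + 2/α) Γ(1 − 2/α) = π s^{2/α}/sinc(2/α) for all s > 0. -/
/-!
Substituting `r = x ^ (1 / α)` and then `x = s y` turns the integral into
`(2π / α) s ^ (2 / α) ∫₀^∞ y ^ (2 / α - 1) / (1 + y) dy`, and `t = y / (1 + y)` identifies the last
integral with the Beta integral `B(2 / α, 1 - 2 / α) = Γ(2 / α) Γ(1 - 2 / α)`. The two closed forms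
then follow from `Γ(1 + a) = a Γ(a)` and the reflection formula `Γ(a) Γ(1 - a) = π / sin (π a)`.
-/

open MeasureTheory Real

noncomputable def sinc (z : ℝ) : ℝ := Real.sin (Real.pi * z) / (Real.pi * z)

open Set

theorem integral_Ioo_rpow_mul_one_sub_rpow {u v : ℝ} (hu : 0 < u) (hv : 0 < v) :
    ∫ t in Ioo (0 : ℝ) 1, t ^ (u - 1) * (1 - t) ^ (v - 1) = Gamma u * Gamma v / Gamma (u + v) := by
  have hbeta : Complex.betaIntegral u v =
      ((∫ t in Ioo (0 : ℝ) 1, t ^ (u - 1) * (1 - t) ^ (v - 1) : ℝ) : ℂ) := by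
    rw [Complex.betaIntegral, intervalIntegral.integral_of_le zero_le_one,
      integral_Ioc_eq_integral_Ioo, ← integral_complex_ofReal]
    refine setIntegral_congr_fun measurableSet_Ioo fun t ⟨ht0, ht1⟩ => ?_
    push_cast [Complex.ofReal_cpow ht0.le, Complex.ofReal_cpow (sub_nonneg.2 ht1.le)]
    rfl
  have h := Complex.betaIntegral_eq_Gamma_mul_div (u : ℂ) v (by simpa using hu) (by simpa using hv)
  rw [hbeta, ← Complex.ofReal_add, Complex.Gamma_ofReal, Complex.Gamma_ofReal,
    Complex.Gamma_ofReal] at h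
  exact_mod_cast h

theorem image_div_one_add_Ioi : (fun y : ℝ => y / (1 + y)) '' Ioi 0 = Ioo 0 1 := by
  ext t
  constructor
  · rintro ⟨y, hy, rfl⟩
    have hy : (0 : ℝ) < y := hy
    exact ⟨by positivity, (div_lt_one (by positivity)).2 (by linarith)⟩
  · rintro ⟨ht0, ht1⟩
    refine ⟨t / (1 - t), div_pos ht0 (by linarith), ?_⟩
    have : 1 - t ≠ 0 := by linarith
    field_simp
    ring

theorem injOn_div_one_add_Ioi : InjOn (fun y : ℝ => y / (1 + y)) (Ioi 0) := by
  intro y₁ hy₁ y₂ hy₂ h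
  have hy₁ : (0 : ℝ) < y₁ := hy₁
  have hy₂ : (0 : ℝ) < y₂ := hy₂
  rw [div_eq_div_iff (by positivity) (by positivity)] at h
  linarith

theorem integral_Ioi_rpow_div_one_add_rpow {u v : ℝ} (hu : 0 < u) (hv : 0 < v) :
    ∫ y in Ioi (0 : ℝ), y ^ (u - 1) / (1 + y) ^ (u + v) = Gamma u * Gamma v / Gamma (u + v) := by
  have hderiv : ∀ y ∈ Ioi (0 : ℝ),
      HasDerivWithinAt (fun y => y / (1 + y)) (((1 + y) ^ 2)⁻¹) (Ioi 0) y := by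
    intro y hy
    have h1y : 1 + y ≠ 0 := by linarith [mem_Ioi.1 hy]
    refine (((hasDerivAt_id y).div ((hasDerivAt_id y).const_add 1) h1y).congr_deriv
      ?_).hasDerivWithinAt
    simp
  rw [← integral_Ioo_rpow_mul_one_sub_rpow hu hv, ← image_div_one_add_Ioi,
    integral_image_eq_integral_abs_deriv_smul measurableSet_Ioi hderiv injOn_div_one_add_Ioi]
  refine setIntegral_congr_fun measurableSet_Ioi fun y hy => ?_
  have hy : (0 : ℝ) < y := hy
  have h1y : (0 : ℝ) < 1 + y := by positivity
  have hsplit : (1 + y) ^ (u + v) = (1 + y) ^ (u - 1) * (1 + y) ^ (v - 1) * (1 + y) ^ 2 := by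
    rw [← rpow_add h1y, ← rpow_natCast, ← rpow_add h1y]
    congr 1
    push_cast
    ring
  rw [show 1 - y / (1 + y) = (1 + y)⁻¹ by field_simp; ring, div_rpow hy.le h1y.le,
    inv_rpow h1y.le, hsplit, smul_eq_mul, abs_of_pos (by positivity)]
  field_simp

theorem integral_Ioi_rpow_div_add {c s : ℝ} (hc0 : 0 < c) (hc1 : c < 1) (hs : 0 < s) :
    ∫ x in Ioi (0 : ℝ), x ^ (c - 1) / (s + x) = s ^ (c - 1) * (Gamma c * Gamma (1 - c)) := by
  have hmellin := integral_Ioi_rpow_div_one_add_rpow hc0 (sub_pos.2 hc1)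
  simp only [add_sub_cancel, rpow_one, Gamma_one, div_one] at hmellin
  rw [← mul_zero s, ← integral_comp_mul_left_Ioi' _ _ hs, ← hmellin, smul_eq_mul,
    ← integral_const_mul, ← integral_const_mul]
  refine setIntegral_congr_fun measurableSet_Ioi fun y hy => ?_
  have hy : (0 : ℝ) < y := hy
  rw [mul_rpow hs.le hy.le, rpow_sub_one hs.ne']
  field_simp

theorem integral_Ioi_rpow_mul_one_sub_one_div_one_add_rpow_neg {α β s : ℝ} (hβ : 0 < β)
    (hβα : β < α) (hs : 0 < s) :
    ∫ r in Ioi (0 : ℝ), r ^ (β - 1) * (1 - 1 / (1 + s * r ^ (-α)))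
      = s ^ (β / α) / α * (Gamma (β / α) * Gamma (1 - β / α)) := by
  have hα : 0 < α := hβ.trans hβα
  have hc0 : 0 < β / α := div_pos hβ hα
  have hc1 : β / α < 1 := (div_lt_one hα).2 hβα
  calc ∫ r in Ioi (0 : ℝ), r ^ (β - 1) * (1 - 1 / (1 + s * r ^ (-α)))
      = ∫ x in Ioi (0 : ℝ), (|α⁻¹| * x ^ (α⁻¹ - 1)) •
          ((x ^ α⁻¹) ^ (β - 1) * (1 - 1 / (1 + s * (x ^ α⁻¹) ^ (-α)))) :=
        (integral_comp_rpow_Ioi (fun r => r ^ (β - 1) * (1 - 1 / (1 + s * r ^ (-α))))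
          (inv_ne_zero hα.ne')).symm
    _ = ∫ x in Ioi (0 : ℝ), s / α * (x ^ (β / α - 1) / (s + x)) := by
        refine setIntegral_congr_fun measurableSet_Ioi fun x hx => ?_
        have hx : (0 : ℝ) < x := hx
        have hexp : x ^ (α⁻¹ - 1) * x ^ (α⁻¹ * (β - 1)) = x ^ (β / α - 1) := by
          rw [← rpow_add hx]
          congr 1
          field_simp
          ring
        rw [← rpow_mul hx.le, ← rpow_mul hx.le, mul_neg, inv_mul_cancel₀ hα.ne', rpow_neg_one,
          smul_eq_mul, abs_of_pos (inv_pos.2 hα), ← hexp]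
        field_simp
        ring
    _ = s ^ (β / α) / α * (Gamma (β / α) * Gamma (1 - β / α)) := by
        rw [integral_const_mul, integral_Ioi_rpow_div_add hc0 hc1 hs, rpow_sub_one hs.ne']
        field_simp

/-- The key PGFL integral: for `α > 2` and `s > 0`,
`∫₀^∞ (1 - 1/(1 + s r⁻ᵅ)) 2πr dr = π s^{2/α} Γ(1+2/α) Γ(1-2/α) = π s^{2/α}/sinc(2/α)`. -/
theorem pgfl_key_integral (α : ℝ) (hα : 2 < α) (s : ℝ) (hs : 0 < s) :
    (∫ r in Set.Ioi (0:ℝ), (1 - 1 / (1 + s * r ^ (-α))) * (2 * Real.pi * r))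
        = Real.pi * s ^ (2 / α) * (Real.Gamma (1 + 2 / α) * Real.Gamma (1 - 2 / α)) ∧
    (∫ r in Set.Ioi (0:ℝ), (1 - 1 / (1 + s * r ^ (-α))) * (2 * Real.pi * r))
        = Real.pi * s ^ (2 / α) / _root_.sinc (2 / α) := by
  have hα0 : α ≠ 0 := by positivity
  have hintegral : ∫ r in Ioi (0 : ℝ), (1 - 1 / (1 + s * r ^ (-α))) * (2 * π * r)
      = 2 * π * (s ^ (2 / α) / α * (Gamma (2 / α) * Gamma (1 - 2 / α))) := by
    rw [← integral_Ioi_rpow_mul_one_sub_one_div_one_add_rpow_neg two_pos hα hs,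
      ← integral_const_mul]
    congr 1 with r
    rw [show (2 : ℝ) - 1 = 1 by norm_num, rpow_one]
    ring
  rw [hintegral]
  constructor
  · rw [add_comm, Gamma_add_one (by positivity)]
    field_simp
  · rw [Gamma_mul_Gamma_one_sub, _root_.sinc]
    field_simp
end

section
/- Let R be a random variable with density f_R(r) = 2r/R_0² on [0, R_0] (distance from a uniform point in a disc of radius R_0 to the center), let Y ~ Gamma(U,1) with integer U ≥ 1 be independent of R, and let κ > 0, α > 2. Then E[exp(−κ R^{−α} Y)] = (κ^{2/α}/R_0²)[ y^{U + 2/α − 1}(1−y)^{−2/α} − (U + 2/α − 1) B(y; U + 2/α − 1, 1 − 2/α) ], where y = 1/(κ R_0^{−α} + 1) and B(y; a, b) = ∫₀^y t^{a−1}(1−t)^{b−1} dt is the incomplete Beta function. -/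
/-!
Conditioning on `R` and integrating out `Y ~ Gamma(U, 1)` leaves `E[(1 + κ R^{-α})^{-U}]`. The CDF
pins the law of `R` down to the density `2r/R₀²` on `[0, R₀]`, and the substitution
`t = r^α/(r^α + κ) = 1/(1 + κ r^{-α})` turns the resulting integral into
`κ^{2/α} (2/α) ∫₀^y t^{U+2/α-1} (1-t)^{-2/α-1} dt`. Integrating by parts against
`d/dt (1-t)^{-2/α}` (the recurrence `a B(y;a,b) + (1-b) B(y;a+1,b-1) = y^a (1-y)^{b-1}`) gives the
closed form.
-/

open MeasureTheory ProbabilityTheory Real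

/-- Lower incomplete Beta function `B(y; a, b) = ∫₀^y t^{a-1}(1-t)^{b-1} dt`. -/
noncomputable def incBeta (y a b : ℝ) : ℝ := ∫ t in (0:ℝ)..y, t ^ (a - 1) * (1 - t) ^ (b - 1)

open Set

theorem gammaPDFReal_mul_exp_neg_mul {a r : ℝ} (s : ℝ) (hr : 0 ≤ r) (hrs : 0 < r + s) (x : ℝ) :
    gammaPDFReal a r x * exp (-(s * x)) = (r / (r + s)) ^ a * gammaPDFReal a (r + s) x := by
  unfold gammaPDFReal
  split_ifs
  · rw [div_rpow hr hrs.le, show -((r + s) * x) = -(r * x) + -(s * x) by ring, exp_add]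
    field_simp
  · simp

theorem integral_gammaPDFReal {a r : ℝ} (ha : 0 < a) (hr : 0 < r) :
    ∫ x, gammaPDFReal a r x = 1 := by
  rw [integral_eq_lintegral_of_nonneg_ae (ae_of_all _ (gammaPDFReal_nonneg ha hr))
    (measurable_gammaPDFReal a r).aestronglyMeasurable]
  change (∫⁻ x, gammaPDF a r x).toReal = 1
  rw [lintegral_gammaPDF_eq_one ha hr, ENNReal.toReal_one]

theorem integral_exp_neg_mul_gammaMeasure {a r s : ℝ} (ha : 0 < a) (hr : 0 < r) (hrs : 0 < r + s) :
    ∫ x, exp (-(s * x)) ∂gammaMeasure a r = (r / (r + s)) ^ a := by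
  rw [gammaMeasure, integral_withDensity_eq_integral_toReal_smul (f := gammaPDF a r)
    (measurable_gammaPDFReal a r).ennreal_ofReal
    (ae_of_all _ fun _ => ENNReal.ofReal_lt_top)]
  simp_rw [gammaPDF, ENNReal.toReal_ofReal (gammaPDFReal_nonneg ha hr _), smul_eq_mul,
    gammaPDFReal_mul_exp_neg_mul s hr.le hrs, integral_const_mul, integral_gammaPDFReal ha hrs,
    mul_one]

theorem ae_nonneg_gammaMeasure (a r : ℝ) : ∀ᵐ x ∂gammaMeasure a r, 0 ≤ x := by
  rw [gammaMeasure,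
    ae_withDensity_iff (f := gammaPDF a r) (measurable_gammaPDFReal a r).ennreal_ofReal]
  filter_upwards with x hx
  by_contra h
  exact hx (gammaPDF_of_neg (not_le.mp h))

theorem ProbabilityTheory.IndepFun.integral_comp_eq_integral_integral {Ω α β E : Type*}
    [MeasurableSpace Ω] {μ : Measure Ω} [IsFiniteMeasure μ] [MeasurableSpace α] [MeasurableSpace β]
    [NormedAddCommGroup E] [NormedSpace ℝ E] {X : Ω → α} {Y : Ω → β} (hXY : IndepFun X Y μ)
    (hX : Measurable X) (hY : Measurable Y) {F : α × β → E} (hF : StronglyMeasurable F)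
    (hint : Integrable (fun ω => F (X ω, Y ω)) μ) :
    ∫ ω, F (X ω, Y ω) ∂μ = ∫ x, ∫ y, F (x, y) ∂(μ.map Y) ∂(μ.map X) := by
  have hmap : μ.map (fun ω => (X ω, Y ω)) = (μ.map X).prod (μ.map Y) :=
    (indepFun_iff_map_prod_eq_prod_map_map hX.aemeasurable hY.aemeasurable).mp hXY
  have hint' : Integrable F ((μ.map X).prod (μ.map Y)) := by
    rw [← hmap]
    exact (integrable_map_measure hF.aestronglyMeasurable (hX.prodMk hY).aemeasurable).mpr hint
  rw [← integral_prod _ hint', ← hmap,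
    integral_map (hX.prodMk hY).aemeasurable hF.aestronglyMeasurable]

theorem integral_exp_neg_mul_rpow_neg_mul_eq_integral_map {Ω : Type*} [MeasurableSpace Ω]
    {μ : Measure Ω} [IsFiniteMeasure μ] {R Y : Ω → ℝ} (hR : Measurable R) (hY : Measurable Y)
    (hR₀ : ∀ ω, 0 ≤ R ω) {a : ℝ} (ha : 0 < a) (hYgamma : μ.map Y = gammaMeasure a 1)
    (hindep : IndepFun R Y μ) {κ : ℝ} (hκ : 0 ≤ κ) (α : ℝ) :
    ∫ ω, exp (-(κ * R ω ^ (-α) * Y ω)) ∂μ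
      = ∫ r, (1 / (1 + κ * r ^ (-α))) ^ a ∂(μ.map R) := by
  have hint : Integrable (fun ω => exp (-(κ * R ω ^ (-α) * Y ω))) μ := by
    have hY₀ : ∀ᵐ ω ∂μ, 0 ≤ Y ω :=
      ae_of_ae_map hY.aemeasurable (hYgamma ▸ ae_nonneg_gammaMeasure _ _)
    refine Integrable.mono' (integrable_const 1) (by fun_prop) (hY₀.mono fun ω hω => ?_)
    rw [norm_of_nonneg (exp_pos _).le, exp_le_one_iff, neg_nonpos]
    exact mul_nonneg (mul_nonneg hκ (rpow_nonneg (hR₀ ω) _)) hω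
  rw [hindep.integral_comp_eq_integral_integral hR hY
    (F := fun p => exp (-(κ * p.1 ^ (-α) * p.2))) (by fun_prop) hint, hYgamma]
  refine integral_congr_ae (((ae_map_iff hR.aemeasurable measurableSet_Ici).mpr
    (ae_of_all _ hR₀)).mono fun r hr => ?_)
  exact integral_exp_neg_mul_gammaMeasure (s := κ * r ^ (-α)) ha one_pos
    (by have := rpow_nonneg (mem_Ici.mp hr) (-α); positivity)

theorem MeasureTheory.Measure.ext_of_Iic_of_ae_mem_Icc {α : Type*} [TopologicalSpace α] [MeasurableSpace α]
    [SecondCountableTopology α] [LinearOrder α] [OrderTopology α] [BorelSpace α]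
    {μ ν : Measure α} [IsFiniteMeasure μ] {a b : α} (hab : a ≤ b) (hμ : ∀ᵐ x ∂μ, x ∈ Icc a b)
    (hν : ∀ᵐ x ∂ν, x ∈ Icc a b) (h : ∀ t ∈ Icc a b, μ (Iic t) = ν (Iic t)) : μ = ν := by
  have below : ∀ ρ : Measure α, (∀ᵐ x ∂ρ, x ∈ Icc a b) → ∀ t < a, ρ (Iic t) = 0 :=
    fun ρ hρ t ht => measure_eq_zero_iff_ae_notMem.mpr
      (hρ.mono fun x hx hxt => (hx.1.trans hxt).not_gt ht)
  have above : ∀ ρ : Measure α, (∀ᵐ x ∂ρ, x ∈ Icc a b) → ∀ t, b ≤ t → ρ (Iic t) = ρ (Iic b) :=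
    fun ρ hρ t ht => measure_congr (hρ.mono fun x hx => by
      simp only [eq_iff_iff]
      exact ⟨fun _ => hx.2, fun _ => hx.2.trans ht⟩)
  refine Measure.ext_of_Iic μ ν fun t => ?_
  rcases lt_or_ge t a with hta | hat
  · rw [below μ hμ t hta, below ν hν t hta]
  rcases le_or_gt t b with htb | hbt
  · exact h t ⟨hat, htb⟩
  rw [above μ hμ t hbt.le, above ν hν t hbt.le]
  exact h b ⟨hab, le_rfl⟩

/-- Law of the distance to the centre of a uniform point in the disc of radius `R₀`. -/
noncomputable def discRadiusMeasure (R₀ : ℝ) : Measure ℝ :=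
  (volume.restrict (Icc 0 R₀)).withDensity fun r => ENNReal.ofReal (2 * r / R₀ ^ 2)

theorem discRadiusMeasure_Iic {R₀ t : ℝ} (ht : t ∈ Icc 0 R₀) :
    discRadiusMeasure R₀ (Iic t) = ENNReal.ofReal (t ^ 2 / R₀ ^ 2) := by
  have hset : Iic t ∩ Icc 0 R₀ = Icc 0 t := by
    ext r
    simp only [mem_inter_iff, mem_Iic, mem_Icc]
    exact ⟨fun h => ⟨h.2.1, h.1⟩, fun h => ⟨h.2, h.1, h.2.trans ht.2⟩⟩
  rw [discRadiusMeasure, withDensity_apply _ measurableSet_Iic,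
    Measure.restrict_restrict measurableSet_Iic, hset,
    ← ofReal_integral_eq_lintegral_ofReal (Continuous.integrableOn_Icc (by fun_prop))
      ((ae_restrict_iff' measurableSet_Icc).mpr (ae_of_all _ fun r hr => by
        have := hr.1; positivity)),
    integral_Icc_eq_integral_Ioc, ← intervalIntegral.integral_of_le ht.1]
  simp_rw [div_eq_mul_inv _ (R₀ ^ 2)]
  rw [intervalIntegral.integral_mul_const, intervalIntegral.integral_const_mul, integral_id]
  ring_nf

theorem ae_mem_Icc_discRadiusMeasure (R₀ : ℝ) : ∀ᵐ r ∂discRadiusMeasure R₀, r ∈ Icc 0 R₀ :=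
  (withDensity_absolutelyContinuous _ _).ae_le (ae_restrict_mem measurableSet_Icc)

theorem integral_discRadiusMeasure {R₀ : ℝ} (hR₀ : 0 ≤ R₀) (g : ℝ → ℝ) :
    ∫ r, g r ∂discRadiusMeasure R₀ = ∫ r in (0:ℝ)..R₀, 2 * r / R₀ ^ 2 * g r := by
  rw [discRadiusMeasure, integral_withDensity_eq_integral_toReal_smul (by fun_prop)
      (ae_of_all _ fun _ => ENNReal.ofReal_lt_top), intervalIntegral.integral_of_le hR₀,
    ← integral_Icc_eq_integral_Ioc]
  refine setIntegral_congr_fun measurableSet_Icc fun r hr => ?_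
  rw [ENNReal.toReal_ofReal (by have := hr.1; positivity), smul_eq_mul]

theorem map_eq_discRadiusMeasure {Ω : Type*} [MeasurableSpace Ω] {μ : Measure Ω}
    [IsFiniteMeasure μ] {R : Ω → ℝ} (hR : Measurable R) {R₀ : ℝ} (hR₀ : 0 ≤ R₀)
    (hRcdf : ∀ t ∈ Icc (0:ℝ) R₀, (μ {ω | R ω ≤ t}).toReal = t ^ 2 / R₀ ^ 2)
    (hRrange : ∀ ω, R ω ∈ Icc (0:ℝ) R₀) :
    μ.map R = discRadiusMeasure R₀ := by
  refine Measure.ext_of_Iic_of_ae_mem_Icc hR₀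
    ((ae_map_iff hR.aemeasurable measurableSet_Icc).mpr (ae_of_all _ hRrange))
    (ae_mem_Icc_discRadiusMeasure R₀) fun t ht => ?_
  rw [Measure.map_apply hR measurableSet_Iic, discRadiusMeasure_Iic ht, ← hRcdf t ht,
    ENNReal.ofReal_toReal (measure_ne_top μ _)]
  rfl

theorem continuousOn_one_sub_rpow (p : ℝ) : ContinuousOn (fun t : ℝ => (1 - t) ^ p) (Iio 1) :=
  (continuousOn_const.sub continuousOn_id).rpow_const fun _ ht => Or.inl (sub_ne_zero.mpr ht.ne')

theorem mul_incBeta_add_mul_incBeta_add_one {y a : ℝ} (b : ℝ) (ha : 0 < a) (hy₀ : 0 ≤ y)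
    (hy₁ : y < 1) :
    a * incBeta y a b + (1 - b) * incBeta y (a + 1) (b - 1) = y ^ a * (1 - y) ^ (b - 1) := by
  have hIcc : Icc 0 y ⊆ Iio 1 := fun t ht => ht.2.trans_lt hy₁
  have hcont : ContinuousOn (fun t : ℝ => t ^ a * (1 - t) ^ (b - 1)) (Icc 0 y) :=
    (continuous_rpow_const ha.le).continuousOn.mul ((continuousOn_one_sub_rpow _).mono hIcc)
  have hderiv : ∀ t ∈ Ioo 0 y, HasDerivAt (fun t : ℝ => t ^ a * (1 - t) ^ (b - 1))
      (a * (t ^ (a - 1) * (1 - t) ^ (b - 1)) + (1 - b) * (t ^ a * (1 - t) ^ (b - 1 - 1))) t := by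
    intro t ht
    have h₁ := hasDerivAt_rpow_const (p := a) (Or.inl ht.1.ne')
    have h₂ := ((hasDerivAt_id t).const_sub 1).rpow_const (p := b - 1)
      (Or.inl (sub_ne_zero.mpr (ht.2.trans hy₁).ne'))
    refine (h₁.mul h₂).congr_deriv ?_
    simp only [id]
    ring
  have hint₁ : IntervalIntegrable (fun t : ℝ => t ^ (a - 1) * (1 - t) ^ (b - 1)) volume 0 y :=
    (intervalIntegral.intervalIntegrable_rpow' (by linarith)).mul_continuousOn
      ((continuousOn_one_sub_rpow _).mono (by rwa [uIcc_of_le hy₀]))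
  have hint₂ : IntervalIntegrable (fun t : ℝ => t ^ a * (1 - t) ^ (b - 1 - 1)) volume 0 y :=
    ((continuous_rpow_const ha.le).continuousOn.mul
      ((continuousOn_one_sub_rpow _).mono (by rwa [uIcc_of_le hy₀]))).intervalIntegrable
  rw [incBeta, incBeta, add_sub_cancel_right, ← intervalIntegral.integral_const_mul,
    ← intervalIntegral.integral_const_mul,
    ← intervalIntegral.integral_add (hint₁.const_mul a) (hint₂.const_mul (1 - b)),
    intervalIntegral.integral_eq_sub_of_hasDerivAt_of_le hy₀ hcont hderiv
      ((hint₁.const_mul a).add (hint₂.const_mul (1 - b))),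
    zero_rpow ha.ne', zero_mul, sub_zero]

/-- The integrand in the form `g (f r) * f' r` for the substitution `t = f r = r^α/(r^α + κ)`. -/
theorem one_div_one_add_mul_rpow_neg_mul_eq {κ α r : ℝ} (s : ℝ) (hκ : 0 < κ) (hα : 0 < α)
    (hr : 0 < r) :
    (1 / (1 + κ * r ^ (-α))) ^ s * (2 * r)
      = κ ^ (2 / α) * (2 / α) * ((r ^ α / (r ^ α + κ)) ^ (s + 2 / α - 1)
          * (1 - r ^ α / (r ^ α + κ)) ^ (-(2 / α) - 1))
        * (κ * α * r ^ (α - 1) / (r ^ α + κ) ^ 2) := by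
  set c := 2 / α with hc
  set x := r ^ α with hx
  have hx₀ : 0 < x := rpow_pos_of_pos hr α
  have hP : 0 < x + κ := by positivity
  have hq : 0 < x / (x + κ) := by positivity
  have hinv : 1 / (1 + κ * r ^ (-α)) = x / (x + κ) := by
    rw [rpow_neg hr.le, ← hx]; field_simp
  have hcompl : 1 - x / (x + κ) = κ / (x + κ) := by field_simp; ring
  have hxc : x ^ c = r ^ 2 := by
    rw [hx, ← rpow_mul hr.le, hc, mul_div_cancel₀ _ hα.ne', rpow_two]
  rw [hinv, hcompl, rpow_sub_one hq.ne', rpow_add hq, rpow_sub_one (by positivity),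
    rpow_neg (by positivity),
    div_rpow hx₀.le hP.le c, div_rpow hκ.le hP.le, hxc, rpow_sub_one hr.ne', ← hx]
  field_simp
  rw [hc, div_mul_cancel₀ _ hα.ne']

theorem integral_one_div_one_add_mul_rpow_neg_mul_eq_incBeta {κ α R₀ : ℝ} (s : ℝ) (hκ : 0 < κ)
    (hα : 1 < α) (hR₀ : 0 ≤ R₀) (hs : 0 ≤ s + 2 / α - 1) :
    ∫ r in (0:ℝ)..R₀, (1 / (1 + κ * r ^ (-α))) ^ s * (2 * r)
      = κ ^ (2 / α) * (2 / α) * incBeta (R₀ ^ α / (R₀ ^ α + κ)) (s + 2 / α) (-(2 / α)) := by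
  set f : ℝ → ℝ := fun r => r ^ α / (r ^ α + κ)
  set f' : ℝ → ℝ := fun r => κ * α * r ^ (α - 1) / (r ^ α + κ) ^ 2
  set g : ℝ → ℝ := fun t =>
    κ ^ (2 / α) * (2 / α) * (t ^ (s + 2 / α - 1) * (1 - t) ^ (-(2 / α) - 1))
  have hP : ∀ r : ℝ, 0 ≤ r → 0 < r ^ α + κ := fun r hr => by positivity
  have hderiv : ∀ r ∈ uIcc 0 R₀, HasDerivAt f (f' r) r := by
    intro r hr
    rw [uIcc_of_le hR₀] at hr
    have h := hasDerivAt_rpow_const (x := r) (Or.inr hα.le)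
    refine (h.div (h.add_const κ) (hP r hr.1).ne').congr_deriv ?_
    simp only [f']
    ring
  have hf'cont : ContinuousOn f' (uIcc 0 R₀) := by
    rw [uIcc_of_le hR₀]
    refine (((continuous_rpow_const (by linarith)).const_mul _).continuousOn).div
      (((continuous_rpow_const (by linarith)).add continuous_const).pow 2).continuousOn ?_
    exact fun r hr => pow_ne_zero 2 (hP r hr.1).ne'
  have hmaps : f '' uIcc 0 R₀ ⊆ Iio 1 := by
    rintro _ ⟨r, hr, rfl⟩
    rw [uIcc_of_le hR₀] at hr
    exact (div_lt_one (hP r hr.1)).mpr (by linarith)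
  have hgcont : ContinuousOn g (Iio 1) :=
    continuousOn_const.mul ((continuous_rpow_const hs).continuousOn.mul
      (continuousOn_one_sub_rpow _))
  have hpointwise : ∀ r ∈ uIcc 0 R₀,
      (1 / (1 + κ * r ^ (-α))) ^ s * (2 * r) = (g ∘ f) r * f' r := by
    intro r hr
    rw [uIcc_of_le hR₀] at hr
    rcases hr.1.eq_or_lt with rfl | hr₀
    · simp [f', zero_rpow (by linarith : α - 1 ≠ 0)]
    · exact one_div_one_add_mul_rpow_neg_mul_eq s hκ (by linarith) hr₀
  rw [intervalIntegral.integral_congr hpointwise,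
    intervalIntegral.integral_comp_mul_deriv' hderiv hf'cont (hgcont.mono hmaps)]
  simp [f, g, incBeta, zero_rpow (by linarith : α ≠ 0)]

theorem integral_one_div_one_add_mul_rpow_neg_discRadiusMeasure {κ α R₀ : ℝ} (s : ℝ)
    (hκ : 0 < κ) (hα : 1 < α) (hR₀ : 0 < R₀) (hs : 0 < s + 2 / α - 1) :
    ∫ r, (1 / (1 + κ * r ^ (-α))) ^ s ∂discRadiusMeasure R₀
      = (κ ^ (2 / α) / R₀ ^ 2) *
          ((1 / (κ * R₀ ^ (-α) + 1)) ^ (s + 2 / α - 1)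
              * (1 - 1 / (κ * R₀ ^ (-α) + 1)) ^ (-(2 / α))
            - (s + 2 / α - 1) *
                incBeta (1 / (κ * R₀ ^ (-α) + 1)) (s + 2 / α - 1) (1 - 2 / α)) := by
  have hy : R₀ ^ α / (R₀ ^ α + κ) = 1 / (κ * R₀ ^ (-α) + 1) := by
    rw [rpow_neg hR₀.le]
    field_simp
    ring
  have hBeta := mul_incBeta_add_mul_incBeta_add_one (1 - 2 / α) hs (by positivity)
    ((div_lt_one (by positivity)).mpr (by linarith) : R₀ ^ α / (R₀ ^ α + κ) < 1)
  rw [show s + 2 / α - 1 + 1 = s + 2 / α by ring, show 1 - 2 / α - 1 = -(2 / α) by ring,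
    sub_sub_cancel, hy] at hBeta
  calc ∫ r, (1 / (1 + κ * r ^ (-α))) ^ s ∂discRadiusMeasure R₀
      = 1 / R₀ ^ 2 * ∫ r in (0:ℝ)..R₀, (1 / (1 + κ * r ^ (-α))) ^ s * (2 * r) := by
        rw [integral_discRadiusMeasure hR₀.le, ← intervalIntegral.integral_const_mul]
        congr 1 with r
        ring
    _ = 1 / R₀ ^ 2 * (κ ^ (2 / α) * (2 / α) *
          incBeta (1 / (κ * R₀ ^ (-α) + 1)) (s + 2 / α) (-(2 / α))) := by
        rw [integral_one_div_one_add_mul_rpow_neg_mul_eq_incBeta _ hκ hα hR₀.le hs.le, hy]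
    _ = _ := by linear_combination (κ ^ (2 / α) / R₀ ^ 2) * hBeta

/-- Laplace transform of the BS-to-D2D interference (Proposition 1): if `R` has density
`2r/R₀²` on `[0,R₀]`, `Y ~ Gamma(U,1)` is independent of `R`, `κ > 0`, `α > 2`, then
`E[exp(-κ R⁻ᵅ Y)] = (κ^{2/α}/R₀²)[y^{U+2/α-1}(1-y)^{-2/α} - (U+2/α-1) B(y; U+2/α-1, 1-2/α)]`
with `y = 1/(κ R₀⁻ᵅ + 1)`. -/
theorem bs_interference_laplace
    {Ω : Type*} [MeasurableSpace Ω] (μ : Measure Ω) [IsProbabilityMeasure μ]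
    (R Y : Ω → ℝ) (hR : Measurable R) (hY : Measurable Y)
    (R₀ : ℝ) (hR₀ : 0 < R₀)
    (hRcdf : ∀ t ∈ Set.Icc (0:ℝ) R₀, (μ {ω | R ω ≤ t}).toReal = t ^ 2 / R₀ ^ 2)
    (hRrange : ∀ ω, R ω ∈ Set.Icc (0:ℝ) R₀)
    (U : ℕ) (hU : 1 ≤ U) (hYgamma : μ.map Y = gammaMeasure U 1)
    (hindep : IndepFun R Y μ)
    (κ α : ℝ) (hκ : 0 < κ) (hα : 2 < α) :
    ∫ ω, Real.exp (-(κ * R ω ^ (-α) * Y ω)) ∂μ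
      = (κ ^ (2 / α) / R₀ ^ 2) *
          ((1 / (κ * R₀ ^ (-α) + 1)) ^ ((U : ℝ) + 2 / α - 1)
              * (1 - 1 / (κ * R₀ ^ (-α) + 1)) ^ (-(2 / α))
            - ((U : ℝ) + 2 / α - 1) *
                incBeta (1 / (κ * R₀ ^ (-α) + 1)) ((U : ℝ) + 2 / α - 1) (1 - 2 / α)) := by
  have hU₁ : (1:ℝ) ≤ U := by exact_mod_cast hU
  rw [integral_exp_neg_mul_rpow_neg_mul_eq_integral_map hR hY (fun ω => (hRrange ω).1)
      (by linarith) hYgamma hindep hκ.le α,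
    map_eq_discRadiusMeasure hR hR₀.le hRcdf hRrange]
  exact integral_one_div_one_add_mul_rpow_neg_discRadiusMeasure _ hκ (by linarith) hR₀
    (by linarith [div_pos two_pos (by linarith : (0:ℝ) < α)])
end
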